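/- If f : [a,b] → ℝ is a bounded function, then for every ε > 0 there exists a partition Q = {q_0 = a < q_1 < ... < q_m = b} of [a,b] such that R(f,Q,RE) − L(f,Q) < ε, where L(f,Q) is the lower Darboux sum of f with respect to Q and R(f,Q,RE) is the Riemann sum of f with respect to Q using right endpoints as sample points. -/

import Mathlib

open Finset Set

/-- `IsPartition a b n x` : `x 0 = a < x 1 < ... < x n = b` is a partition of `[a,b]`
into `n` subintervals. -/
def IsPartition (a b : ℝ) (n : ℕ) (x : ℕ → ℝ) : Prop :=
  0 < n ∧ x 0 = a ∧ x n = b ∧ ∀ k < n, x k < x (k + 1)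

/-- The lower Darboux sum `L(f, P)` of `f` w.r.t. the partition `x`. -/
noncomputable def LowerSum (f : ℝ → ℝ) (n : ℕ) (x : ℕ → ℝ) : ℝ :=
  ∑ k ∈ Finset.range n, sInf (f '' Set.Icc (x k) (x (k + 1))) * (x (k + 1) - x k)

/-- The right-endpoint Riemann sum `R(f, P, RE)` of `f` w.r.t. the partition `x`. -/
def RightEndpointSum (f : ℝ → ℝ) (n : ℕ) (x : ℕ → ℝ) : ℝ :=
  ∑ k ∈ Finset.range n, f (x (k + 1)) * (x (k + 1) - x k)

lemma sInf_image_ge {f : ℝ → ℝ} {p q c : ℝ} (hpq : p ≤ q)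
    (h : ∀ y ∈ Set.Icc p q, c ≤ f y) : c ≤ sInf (f '' Set.Icc p q) := by
  refine le_csInf ⟨f p, ⟨p, ⟨le_refl p, hpq⟩, rfl⟩⟩ ?_
  rintro y ⟨z, hz, rfl⟩
  exact h z hz

lemma onePart (f : ℝ → ℝ) {u v : ℝ} (huv : u < v) :
    IsPartition u v 1 (fun k => if k = 0 then u else v) ∧
    RightEndpointSum f 1 (fun k => if k = 0 then u else v) -
      LowerSum f 1 (fun k => if k = 0 then u else v) =
      (f v - sInf (f '' Set.Icc u v)) * (v - u) := by
  constructor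
  · refine ⟨Nat.one_pos, by simp, by simp, ?_⟩
    intro k hk
    interval_cases k
    simpa using huv
  · simp [RightEndpointSum, LowerSum]
    ring

lemma prepend (f : ℝ → ℝ) {u c v : ℝ} {n : ℕ} {x : ℕ → ℝ} (huc : u < c)
    (hx : IsPartition c v n x) :
    ∃ q, IsPartition u v (n + 1) q ∧
      RightEndpointSum f (n + 1) q - LowerSum f (n + 1) q =
        (f c - sInf (f '' Set.Icc u c)) * (c - u) +
          (RightEndpointSum f n x - LowerSum f n x) := by
  obtain ⟨hn, hx0, hxn, hmono⟩ := hx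
  refine ⟨fun k => if k = 0 then u else x (k - 1), ⟨Nat.succ_pos n, by simp, by simp [hxn], ?_⟩, ?_⟩
  · intro k hk
    match k with
    | 0 => simpa [hx0] using huc
    | Nat.succ j =>
      simp only [Nat.succ_ne_zero, if_false]
      simpa using hmono j (by omega)
  · have hq : ∀ k : ℕ, (fun k => if k = 0 then u else x (k - 1)) (k + 1) = x k := by
      intro k; simp
    unfold RightEndpointSum LowerSum
    rw [Finset.sum_range_succ', Finset.sum_range_succ']
    simp only [hq]
    simp [hx0]
    ring

lemma term_le {f : ℝ → ℝ} {M a b p q : ℝ} (hM : ∀ y ∈ Set.Icc a b, |f y| ≤ M)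
    (hap : a ≤ p) (hpq : p ≤ q) (hqb : q ≤ b) :
    f q - sInf (f '' Set.Icc p q) ≤ 2 * M := by
  have h1 : f q ≤ M := by
    have := hM q ⟨le_trans hap hpq, hqb⟩
    exact (abs_le.mp this).2
  have h2 : -M ≤ sInf (f '' Set.Icc p q) := by
    apply sInf_image_ge hpq
    intro y hy
    have := hM y ⟨le_trans hap hy.1, le_trans hy.2 hqb⟩
    exact (abs_le.mp this).1
  linarith

set_option maxHeartbeats 2000000 in
lemma key (f : ℝ → ℝ) (a b M ε' δ : ℝ)
    (hM : ∀ y ∈ Set.Icc a b, |f y| ≤ M)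
    (hε' : 0 < ε') (hδ : 0 < δ) :
    ∀ j : ℕ, ∀ u v : ℝ, a ≤ u → v ≤ b → u < v →
      (∀ x ∈ Set.Ico u v, M - j * ε' ≤ f x) →
      ∃ n q, IsPartition u v n q ∧
        RightEndpointSum f n q - LowerSum f n q ≤
          ε' * (v - u) + (2 * j + 1) * ((2 * M + 1) * δ) := by
  intro j
  induction j with
  | zero =>
    intro u v hau hvb huv hlow
    have hM0 : 0 ≤ M := le_trans (abs_nonneg _) (hM v ⟨le_trans hau huv.le, hvb⟩)
    obtain ⟨hpart, hD⟩ := onePart f huv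
    refine ⟨1, _, hpart, ?_⟩
    rw [hD]
    have hfv : f v ≤ M := (abs_le.mp (hM v ⟨le_trans hau huv.le, hvb⟩)).2
    have hinf : f v ≤ sInf (f '' Set.Icc u v) := by
      apply sInf_image_ge huv.le
      intro y hy
      rcases eq_or_lt_of_le hy.2 with h | h
      · exact le_of_eq (by rw [h])
      · have := hlow y ⟨hy.1, h⟩
        simp only [Nat.cast_zero, zero_mul, sub_zero] at this
        linarith
    have h1 : (f v - sInf (f '' Set.Icc u v)) * (v - u) ≤ 0 :=
      mul_nonpos_of_nonpos_of_nonneg (by linarith) (by linarith)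
    have h2 : 0 ≤ ε' * (v - u) := mul_nonneg hε'.le (by linarith)
    have h3 : (0:ℝ) ≤ (2 * M + 1) * δ := by positivity
    push_cast
    nlinarith
  | succ j ih =>
    intro u v hau hvb huv hlow
    have hM0 : 0 ≤ M := le_trans (abs_nonneg _) (hM v ⟨le_trans hau huv.le, hvb⟩)
    have hCpos : (0:ℝ) < (2 * M + 1) * δ := by positivity
    by_cases hA : v - u ≤ δ
    · -- short interval: single piece
      obtain ⟨hpart, hD⟩ := onePart f huv
      refine ⟨1, _, hpart, ?_⟩
      rw [hD]
      have ht := term_le hM hau huv.le hvb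
      have h1 : (f v - sInf (f '' Set.Icc u v)) * (v - u) ≤ 2 * M * δ := by
        nlinarith [term_le hM hau huv.le hvb, huv.le]
      have h2 : 0 ≤ ε' * (v - u) := mul_nonneg hε'.le (by linarith)
      have hj : (1:ℝ) ≤ 2 * (j+1:ℕ) + 1 := by push_cast; linarith
      nlinarith
    · push_neg at hA
      -- m : inf over Ico u v
      set m := sInf (f '' Set.Ico u v) with hm
      have hne : (f '' Set.Ico u v).Nonempty := ⟨f u, u, ⟨le_refl u, huv⟩, rfl⟩
      have hbdd : BddBelow (f '' Set.Ico u v) := by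
        refine ⟨-M, ?_⟩
        rintro y ⟨z, hz, rfl⟩
        exact (abs_le.mp (hM z ⟨le_trans hau hz.1, le_trans hz.2.le hvb⟩)).1
      have hmle : ∀ x ∈ Set.Ico u v, m ≤ f x := fun x hx => csInf_le hbdd ⟨x, hx, rfl⟩
      have hmlb : M - (j+1 : ℕ) * ε' ≤ m := le_csInf hne (by rintro y ⟨z, hz, rfl⟩; exact hlow z hz)
      by_cases hB1 : ∃ c, (u < c ∧ c < v ∧ f c < m + ε') ∧ v - δ ≤ c
      · -- good point near v : two intervals [u,c], [c,v]
        obtain ⟨c, ⟨huc, hcv, hfc⟩, hcd⟩ := hB1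
        obtain ⟨hpart1, hD1⟩ := onePart f hcv
        obtain ⟨q, hpart, hD⟩ := prepend f huc hpart1
        refine ⟨2, q, hpart, ?_⟩
        rw [hD, hD1]
        have hinf1 : m ≤ sInf (f '' Set.Icc u c) := by
          apply sInf_image_ge huc.le
          intro y hy
          exact hmle y ⟨hy.1, lt_of_le_of_lt hy.2 hcv⟩
        have ht1 : (f c - sInf (f '' Set.Icc u c)) * (c - u) ≤ ε' * (c - u) :=
          mul_le_mul_of_nonneg_right (by linarith) (by linarith)
        have ht2 : (f v - sInf (f '' Set.Icc c v)) * (v - c) ≤ 2 * M * δ := by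
          have hterm := term_le hM (le_trans hau huc.le) hcv.le hvb
          calc (f v - sInf (f '' Set.Icc c v)) * (v - c) ≤ 2 * M * (v - c) :=
                mul_le_mul_of_nonneg_right hterm (by linarith)
            _ ≤ 2 * M * δ := mul_le_mul_of_nonneg_left (by linarith) (by linarith)
        have h2 : ε' * (c - u) ≤ ε' * (v - u) :=
          mul_le_mul_of_nonneg_left (by linarith) hε'.le
        have haux1 : 2 * M * δ ≤ (2 * M + 1) * δ := by nlinarith
        have haux2 : (0:ℝ) ≤ (2 * (j:ℝ) + 2) * ((2 * M + 1) * δ) := by positivity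
        push_cast
        linarith
      · push_neg at hB1
        -- all good points are ≤ v - δ
        set G : Set ℝ := insert u {x | u < x ∧ x < v ∧ f x < m + ε'} with hG
        have hGne : G.Nonempty := ⟨u, Set.mem_insert u _⟩
        have hGbdd : BddAbove G := by
          refine ⟨v - δ, ?_⟩
          rintro x (rfl | ⟨h1, h2, h3⟩)
          · linarith
          · exact (hB1 x ⟨h1, h2, h3⟩).le
        set s := sSup G with hs
        have hus : u ≤ s := le_csSup hGbdd (Set.mem_insert u _)
        have hsv : s ≤ v - δ := csSup_le hGne (by
          rintro x (rfl | ⟨h1, h2, h3⟩)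
          · linarith
          · exact (hB1 x ⟨h1, h2, h3⟩).le)
        set c₂ := min (s + δ/2) ((s + v)/2) with hc₂
        have hsc₂ : s < c₂ := by
          apply lt_min (by linarith) (by linarith)
        have hc₂v : c₂ < v := lt_of_le_of_lt (min_le_right _ _) (by linarith)
        have huc₂ : u < c₂ := lt_of_le_of_lt hus hsc₂
        have hc₂s : c₂ - s ≤ δ/2 := by
          have := min_le_left (s + δ/2) ((s + v)/2)
          linarith
        -- recursion on [c₂, v]
        have hrec : ∀ x ∈ Set.Ico c₂ v, M - (j:ℕ) * ε' ≤ f x := by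
          intro x hx
          have hxu : u < x := lt_of_lt_of_le huc₂ hx.1
          have hxnotG : ¬ (f x < m + ε') := by
            intro hbad
            have hxG : x ∈ G := Set.mem_insert_of_mem _ ⟨hxu, hx.2, hbad⟩
            have hxs : x ≤ s := le_csSup hGbdd hxG
            linarith [hx.1]
          push_neg at hxnotG
          have hc : ((j+1:ℕ):ℝ) = (j:ℝ) + 1 := by push_cast; ring
          rw [hc] at hmlb
          nlinarith
        obtain ⟨n, x, hxpart, hxD⟩ := ih c₂ v (le_trans hau huc₂.le) hvb hc₂v hrec
        by_cases hB2 : ∃ c, (u < c ∧ c < v ∧ f c < m + ε') ∧ s - δ/2 < c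
        · -- prepend [c, c₂] then [u, c]
          obtain ⟨c, ⟨huc, hcv, hfc⟩, hclow⟩ := hB2
          have hcs : c ≤ s := le_csSup hGbdd (Set.mem_insert_of_mem _ ⟨huc, hcv, hfc⟩)
          have hcc₂ : c < c₂ := lt_of_le_of_lt hcs hsc₂
          obtain ⟨q1, hq1part, hq1D⟩ := prepend f hcc₂ hxpart
          obtain ⟨q, hqpart, hqD⟩ := prepend f huc hq1part
          refine ⟨n + 1 + 1, q, hqpart, ?_⟩
          rw [hqD, hq1D]
          have hinf1 : m ≤ sInf (f '' Set.Icc u c) := by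
            apply sInf_image_ge huc.le
            intro y hy
            exact hmle y ⟨hy.1, lt_of_le_of_lt hy.2 hcv⟩
          have ht1 : (f c - sInf (f '' Set.Icc u c)) * (c - u) ≤ ε' * (c - u) :=
            mul_le_mul_of_nonneg_right (by linarith) (by linarith)
          have ht2 : (f c₂ - sInf (f '' Set.Icc c c₂)) * (c₂ - c) ≤ 2 * M * δ := by
            have hterm := term_le hM (le_trans hau huc.le) hcc₂.le (le_trans hc₂v.le hvb)
            calc (f c₂ - sInf (f '' Set.Icc c c₂)) * (c₂ - c) ≤ 2 * M * (c₂ - c) :=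
                  mul_le_mul_of_nonneg_right hterm (by linarith)
              _ ≤ 2 * M * δ := mul_le_mul_of_nonneg_left (by linarith) (by linarith)
          have hgrow : ε' * (c - u) + ε' * (v - c₂) ≤ ε' * (v - u) := by
            have := mul_le_mul_of_nonneg_left (show (c - u) + (v - c₂) ≤ v - u by linarith) hε'.le
            linarith
          have haux1 : 2 * M * δ ≤ (2 * M + 1) * δ := by nlinarith
          push_cast at hxD ⊢
          linarith
        · -- no good point above s - δ/2 : then u > s - δ/2, prepend single short [u, c₂]
          push_neg at hB2
          have hu_big : s - δ/2 < u := by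
            obtain ⟨x0, hx0G, hx0gt⟩ := exists_lt_of_lt_csSup hGne (show s - δ/2 < s by linarith)
            rcases hx0G with rfl | ⟨h1, h2, h3⟩
            · exact hx0gt
            · exact absurd (hB2 x0 ⟨h1, h2, h3⟩) (not_le.mpr hx0gt)
          obtain ⟨q, hqpart, hqD⟩ := prepend f huc₂ hxpart
          refine ⟨n + 1, q, hqpart, ?_⟩
          rw [hqD]
          have ht1 : (f c₂ - sInf (f '' Set.Icc u c₂)) * (c₂ - u) ≤ 2 * M * δ := by
            have hterm := term_le hM hau huc₂.le (le_trans hc₂v.le hvb)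
            calc (f c₂ - sInf (f '' Set.Icc u c₂)) * (c₂ - u) ≤ 2 * M * (c₂ - u) :=
                  mul_le_mul_of_nonneg_right hterm (by linarith)
              _ ≤ 2 * M * δ := mul_le_mul_of_nonneg_left (by linarith) (by linarith)
          have hgrow : ε' * (v - c₂) ≤ ε' * (v - u) :=
            mul_le_mul_of_nonneg_left (by linarith) hε'.le
          have haux1 : 2 * M * δ ≤ (2 * M + 1) * δ := by nlinarith
          have haux3 : (0:ℝ) ≤ (2 * M + 1) * δ := by positivity
          push_cast at hxD ⊢
          linarith

/-- For any bounded `f : [a,b] → ℝ` and any `ε > 0` there is a partition `Q` of `[a,b]`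
with `R(f,Q,RE) - L(f,Q) < ε`. -/
theorem right_endpoint_sum_close_to_lower_sum (a b : ℝ) (hab : a < b) (f : ℝ → ℝ)
    (hbd : ∃ M : ℝ, ∀ y ∈ Set.Icc a b, |f y| ≤ M) :
    ∀ ε > 0, ∃ (m : ℕ) (q : ℕ → ℝ), IsPartition a b m q ∧
      RightEndpointSum f m q - LowerSum f m q < ε := by
  intro ε hε
  obtain ⟨M, hM⟩ := hbd
  have hM0 : 0 ≤ M := le_trans (abs_nonneg _) (hM a ⟨le_refl a, hab.le⟩)
  have hba : 0 < b - a := sub_pos.mpr hab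
  set ε' : ℝ := ε / (3 * (b - a)) with hε'def
  have hε' : 0 < ε' := by positivity
  set J : ℕ := Nat.ceil (2 * M / ε') with hJdef
  have hJ : 2 * M / ε' ≤ (J : ℝ) := Nat.le_ceil _
  have hJε' : 2 * M ≤ (J : ℝ) * ε' := by
    rw [div_le_iff₀ hε'] at hJ
    linarith
  have hden : (0:ℝ) < (2 * (J:ℝ) + 1) * (2 * M + 1) := by positivity
  set δ : ℝ := ε / (3 * ((2 * (J:ℝ) + 1) * (2 * M + 1))) with hδdef
  have hδ : 0 < δ := by positivity
  obtain ⟨n, q, hpart, hD⟩ := key f a b M ε' δ hM hε' hδ J a b (le_refl a) (le_refl b) hab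
    (by
      intro x hx
      have hxb : x ∈ Set.Icc a b := ⟨hx.1, hx.2.le⟩
      have := (abs_le.mp (hM x hxb)).1
      linarith)
  refine ⟨n, q, hpart, lt_of_le_of_lt hD ?_⟩
  have h1 : ε' * (b - a) = ε / 3 := by
    rw [hε'def]
    field_simp
  have h2 : (2 * (J:ℝ) + 1) * ((2 * M + 1) * δ) = ε / 3 := by
    rw [hδdef]
    field_simp
  rw [h1, h2]
  linarith
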